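/- Let X : ℝᵒᵖ → Set be a functor (a projective system of sets indexed by the real numbers with their usual order). Assume that for each s ∈ ℝ both of the natural maps colim_{t>s} X_t → X_s and X_s → lim_{r<s} X_r are bijective. Then the functor X is constant; that is, for all real numbers s ≤ t the transition map ρ_{s,t} : X_t → X_s is a bijection. -/

import Mathlib

open CategoryTheory CategoryTheory.Limits Opposite

/-- The restriction of a functor `X : ℝᵒᵖ ⥤ C` to the (opposite of the) ordered set
`{t : ℝ // s < t}`. -/
def restrictGT {C : Type*} [Category C] (X : ℝᵒᵖ ⥤ C) (s : ℝ) :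
    ({t : ℝ // s < t})ᵒᵖ ⥤ C :=
  (Monotone.functor (f := fun t : {t : ℝ // s < t} => (t : ℝ)) fun _ _ h => h).op ⋙ X

/-- The canonical cocone on `restrictGT X s` with apex `X s`, whose legs are the
transition maps `X t → X s` for `t > s`. -/
def coconeGT {C : Type*} [Category C] (X : ℝᵒᵖ ⥤ C) (s : ℝ) : Cocone (restrictGT X s) where
  pt := X.obj (op s)
  ι :=
    { app := fun t => X.map (homOfLE t.unop.2.le).op
      naturality := fun a b f => by
        refine ((X.map_comp _ _).symm.trans ?_).trans (Category.comp_id _).symm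
        rfl }

/-- The restriction of a functor `X : ℝᵒᵖ ⥤ C` to the (opposite of the) ordered set
`{r : ℝ // r < s}`. -/
def restrictLT {C : Type*} [Category C] (X : ℝᵒᵖ ⥤ C) (s : ℝ) :
    ({r : ℝ // r < s})ᵒᵖ ⥤ C :=
  (Monotone.functor (f := fun r : {r : ℝ // r < s} => (r : ℝ)) fun _ _ h => h).op ⋙ X

/-- The canonical cone on `restrictLT X s` with apex `X s`, whose legs are the
transition maps `X s → X r` for `r < s`. -/
def coneLT {C : Type*} [Category C] (X : ℝᵒᵖ ⥤ C) (s : ℝ) : Cone (restrictLT X s) where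
  pt := X.obj (op s)
  π :=
    { app := fun r => X.map (homOfLE r.unop.2.le).op
      naturality := fun a b f => by
        refine (Category.id_comp _).trans (Eq.trans ?_ (X.map_comp _ _))
        rfl }

section Aux

instance nonemptyGT (s : ℝ) : Nonempty {t : ℝ // s < t} := ⟨⟨s + 1, by linarith⟩⟩

instance directedGT (s : ℝ) : IsDirected {t : ℝ // s < t} (· ≥ ·) :=
  ⟨fun a b => ⟨⟨min a b, lt_min a.2 b.2⟩, min_le_left _ _, min_le_right _ _⟩⟩

variable (X : ℝᵒᵖ ⥤ Type)

def rr {a b : ℝ} (h : a ≤ b) : X.obj (op b) → X.obj (op a) := X.map (homOfLE h).op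

lemma rr_rr {a b c : ℝ} (h1 : a ≤ b) (h2 : b ≤ c) (x : X.obj (op c)) :
    rr X h1 (rr X h2 x) = rr X (h1.trans h2) x := by
  show (X.map (homOfLE h2).op ≫ X.map (homOfLE h1).op) x = _
  rw [← X.map_comp]
  rfl

lemma rr_id {a : ℝ} (h : a ≤ a) (x : X.obj (op a)) : rr X h x = x := by
  show (X.map (𝟙 (op a))) x = x
  rw [X.map_id]
  rfl

lemma restrictGT_map {s : ℝ} {a b : ({t : ℝ // s < t})ᵒᵖ} (f : a ⟶ b)
    (h : (b.unop : ℝ) ≤ (a.unop : ℝ)) (x : X.obj (op (a.unop : ℝ))) :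
    (restrictGT X s).map f x = rr X h x := by
  dsimp [restrictGT, rr]
  exact ConcreteCategory.congr_hom (congrArg X.map (Subsingleton.elim _ _)) x

lemma coconeGT_app {s : ℝ} (j : ({t : ℝ // s < t})ᵒᵖ) (x : X.obj (op (j.unop : ℝ))) :
    (coconeGT X s).ι.app j x = rr X j.unop.2.le x := rfl

lemma coneLT_app {s : ℝ} (j : ({r : ℝ // r < s})ᵒᵖ) (x : X.obj (op s)) :
    (coneLT X s).π.app j x = rr X j.unop.2.le x := rfl

end Aux

theorem CFC.inj_aux (X : ℝᵒᵖ ⥤ Type)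
    (hcolim : ∀ s : ℝ,
      Function.Bijective (colimit.desc (restrictGT X s) (coconeGT X s)))
    (hlim : ∀ s : ℝ,
      Function.Bijective (limit.lift (restrictLT X s) (coneLT X s))) :
    ∀ (s t : ℝ) (h : s ≤ t), Function.Injective (rr X h) := by
  intro s t h x y hxy
  set A : Set ℝ := {u | ∃ _ : s ≤ u, ∃ h2 : u ≤ t, rr X h2 x = rr X h2 y} with hA
  have hsA : s ∈ A := ⟨le_rfl, h, hxy⟩
  have bdd : BddAbove A := ⟨t, fun u hu => hu.2.1⟩
  set c := sSup A with hc
  have hsc : s ≤ c := le_csSup bdd hsA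
  have hct : c ≤ t := csSup_le ⟨s, hsA⟩ fun u hu => hu.2.1
  -- step 1 : c ∈ A
  have hPc : rr X hct x = rr X hct y := by
    apply (hlim c).1
    apply Types.limit_ext
    intro j
    have l1 := types_congr_hom (limit.lift_π (coneLT X c) j) (rr X hct x)
    have l2 := types_congr_hom (limit.lift_π (coneLT X c) j) (rr X hct y)
    refine (l1.trans ?_).trans l2.symm
    show rr X j.unop.2.le (rr X hct x) = rr X j.unop.2.le (rr X hct y)
    obtain ⟨u, hu, hru⟩ := exists_lt_of_lt_csSup ⟨s, hsA⟩ j.unop.2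
    obtain ⟨hsu, hut, hxyu⟩ := hu
    have e := congrArg (rr X hru.le) hxyu
    rw [rr_rr, rr_rr] at e
    rw [rr_rr, rr_rr]
    exact e
  have hcA : c ∈ A := ⟨hsc, hct, hPc⟩
  rcases hct.lt_or_eq with hclt | heq
  · exfalso
    have hι : colimit.ι (restrictGT X c) (op ⟨t, hclt⟩) x
        = colimit.ι (restrictGT X c) (op ⟨t, hclt⟩) y := by
      apply (hcolim c).1
      have d1 := types_congr_hom (colimit.ι_desc (coconeGT X c) (op ⟨t, hclt⟩)) x
      have d2 := types_congr_hom (colimit.ι_desc (coconeGT X c) (op ⟨t, hclt⟩)) y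
      dsimp at d1 d2
      exact d1.trans (hPc.trans d2.symm)
    obtain ⟨k, f, g, hk⟩ := (Types.FilteredColimit.colimit_eq_iff _).mp hι
    have hut : (k.unop : ℝ) ≤ t := leOfHom f.unop
    rw [restrictGT_map X f hut, restrictGT_map X g hut] at hk
    have : (k.unop : ℝ) ∈ A := ⟨hsc.trans k.unop.2.le, hut, hk⟩
    exact absurd (le_csSup bdd this) (not_le.mpr k.unop.2)
  · obtain ⟨_, h2, hxy2⟩ := heq ▸ hcA
    rw [rr_id, rr_id] at hxy2
    exact hxy2

lemma restrictLT_map (X : ℝᵒᵖ ⥤ Type) {s : ℝ} {a b : ({r : ℝ // r < s})ᵒᵖ} (f : a ⟶ b)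
    (h : (b.unop : ℝ) ≤ (a.unop : ℝ)) (x : X.obj (op (a.unop : ℝ))) :
    (restrictLT X s).map f x = rr X h x := by
  dsimp [restrictLT, rr]
  exact ConcreteCategory.congr_hom (congrArg X.map (Subsingleton.elim _ _)) x

theorem CFC.surj_aux (X : ℝᵒᵖ ⥤ Type)
    (hcolim : ∀ s : ℝ,
      Function.Bijective (colimit.desc (restrictGT X s) (coconeGT X s)))
    (hlim : ∀ s : ℝ,
      Function.Bijective (limit.lift (restrictLT X s) (coneLT X s))) :
    ∀ (s t : ℝ) (h : s ≤ t), Function.Surjective (rr X h) := by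
  have hinj := CFC.inj_aux X hcolim hlim
  intro s t h y
  set B : Set ℝ := {u | ∃ h1 : s ≤ u, u ≤ t ∧ ∃ z, rr X h1 z = y} with hB
  have hsB : s ∈ B := ⟨le_rfl, h, y, rr_id X le_rfl y⟩
  have bdd : BddAbove B := ⟨t, fun u hu => hu.2.1⟩
  set c := sSup B with hc
  have hsc : s ≤ c := le_csSup bdd hsB
  have hct : c ≤ t := csSup_le ⟨s, hsB⟩ fun u hu => hu.2.1
  -- a compatible family below c
  have hex : ∀ (r : ℝ), r < c → ∃ w : X.obj (op r),
      rr X (min_le_left r s) w = rr X (min_le_right r s) y := by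
    intro r hr
    rcases le_total r s with hrs | hsr
    · refine ⟨rr X hrs y, ?_⟩
      rw [rr_rr]
    · obtain ⟨u, hu, hru⟩ := exists_lt_of_lt_csSup ⟨s, hsB⟩ hr
      obtain ⟨h1, h2, z, hz⟩ := hu
      refine ⟨rr X hru.le z, ?_⟩
      have e1 : rr X (min_le_left r s) (rr X hru.le z)
          = rr X ((min_le_right r s).trans h1) z := rr_rr X _ _ z
      have e2 : rr X ((min_le_right r s).trans h1) z
          = rr X (min_le_right r s) (rr X h1 z) := (rr_rr X _ _ z).symm
      rw [e1, e2, hz]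
  choose el hel using hex
  have compat : ∀ (a b : {r : ℝ // r < c}) (hba : (b : ℝ) ≤ (a : ℝ)),
      rr X hba (el a.1 a.2) = el b.1 b.2 := by
    intro a b hba
    apply hinj (min b.1 s) b.1 (min_le_left _ _)
    have hmm : min b.1 s ≤ min a.1 s := min_le_min hba le_rfl
    have e1 : rr X (min_le_left b.1 s) (rr X hba (el a.1 a.2))
        = rr X (hmm.trans (min_le_left a.1 s)) (el a.1 a.2) := rr_rr X _ _ _
    have e2 : rr X (hmm.trans (min_le_left a.1 s)) (el a.1 a.2)
        = rr X hmm (rr X (min_le_left a.1 s) (el a.1 a.2)) := (rr_rr X _ _ _).symm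
    rw [e1, e2, hel a.1 a.2, rr_rr, hel b.1 b.2]
  obtain ⟨zc, hzc⟩ := (hlim c).2 (Types.Limit.mk (restrictLT X c)
      (fun j => el j.unop.1 j.unop.2)
      (fun j j' f => by
        rw [restrictLT_map X f (leOfHom f.unop)]
        exact compat j.unop j'.unop (leOfHom f.unop)))
  have hcomp : ∀ j : ({r : ℝ // r < c})ᵒᵖ, rr X j.unop.2.le zc = el j.unop.1 j.unop.2 := by
    intro j
    have p1 := types_congr_hom (limit.lift_π (coneLT X c) j) zc
    replace p1 : rr X j.unop.2.le zc
        = limit.π (restrictLT X c) j (limit.lift (restrictLT X c) (coneLT X c) zc) := p1.symm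
    rw [hzc] at p1
    exact p1.trans (Types.Limit.π_mk ..)
  have hcB : c ∈ B := by
    rcases hsc.lt_or_eq with hslt | heq
    · refine ⟨hsc, hct, zc, ?_⟩
      have h1 := hcomp (op ⟨s, hslt⟩)
      have h2 := hel s hslt
      have h3 : el s hslt = y := hinj (min s s) s (min_le_left s s) h2
      calc rr X hsc zc = el s hslt := h1
        _ = y := h3
    · exact heq ▸ hsB
  rcases hct.lt_or_eq with hclt | heq
  · exfalso
    obtain ⟨h1, _, z, hz⟩ := hcB
    obtain ⟨ξ, hξ⟩ := (hcolim c).2 z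
    obtain ⟨j, w, hw⟩ := Types.jointly_surjective' ξ
    have hdesc := types_congr_hom (colimit.ι_desc (coconeGT X c) j) w
    replace hdesc : colimit.desc (restrictGT X c) (coconeGT X c) (colimit.ι (restrictGT X c) j w)
        = rr X j.unop.2.le w := hdesc
    rw [hw, hξ] at hdesc
    change z = rr X j.unop.2.le w at hdesc
    -- hdesc : z = rr X j.unop.2.le w
    have hcu : c < (j.unop : ℝ) := j.unop.2
    have hcu' : c < min (j.unop : ℝ) t := lt_min hcu hclt
    have e1 : rr X (hsc.trans hcu'.le) (rr X (min_le_left (j.unop : ℝ) t) w)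
        = rr X (hsc.trans hcu.le) w := rr_rr X _ _ _
    have e2 : rr X (hsc.trans hcu.le) w
        = rr X hsc (rr X hcu.le w) := (rr_rr X _ _ _).symm
    have : min (j.unop : ℝ) t ∈ B := by
      refine ⟨hsc.trans hcu'.le, min_le_right _ _, rr X (min_le_left (j.unop : ℝ) t) w, ?_⟩
      rw [e1, e2, ← hdesc]
      exact hz
    exact absurd (le_csSup bdd this) (not_le.mpr hcu')
  · obtain ⟨h1, _, z, hz⟩ := heq ▸ hcB
    exact ⟨z, hz⟩

/-- Kashiwara's constant functor criterion for set-valued functors: if for every `s ∈ ℝ`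
the canonical maps `colim_{t>s} X_t → X_s` and `X_s → lim_{r<s} X_r` are bijective,
then all transition maps `X_t → X_s` (for `s ≤ t`) are bijective, i.e. `X` is constant. -/
theorem constant_functor_criterion_sets (X : ℝᵒᵖ ⥤ Type)
    (hcolim : ∀ s : ℝ,
      Function.Bijective (colimit.desc (restrictGT X s) (coconeGT X s)))
    (hlim : ∀ s : ℝ,
      Function.Bijective (limit.lift (restrictLT X s) (coneLT X s))) :
    ∀ (s t : ℝ) (h : s ≤ t), Function.Bijective (X.map (homOfLE h).op) := by
  exact fun s t h => ⟨CFC.inj_aux X hcolim hlim s t h, CFC.surj_aux X hcolim hlim s t h⟩
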